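/- arXiv:1601.07745 — 6 statements merged into one kernel-verified Lean document; each statement's English description precedes it below -/
import Mathlib

section
/- Let λ be an infinite cardinal and let ⟨X_i : i < λ⟩ be a sequence of families of countable bounded subsets of λ such that |X_i| > λ for every i < λ. Then there exists a function d : [λ]^{ℵ0-bd} → λ such that for every i < λ, the image of d on X_i is all of λ, i.e., for every i < λ and every γ < λ there is u ∈ X_i with d(u) = γ. -/
open Cardinal Set

/-- `u` is a member of `[λ]^{ℵ₀-bd}`: a countably infinite subset of `λ`
(identified with the set of ordinals below `λ.ord`) which is bounded, i.e. `sup u < λ`. -/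
def BddCtbl (lam : Cardinal.{0}) (u : Set Ordinal.{0}) : Prop :=
  u ⊆ Set.Iio lam.ord ∧ u.Countable ∧ u.Infinite ∧ sSup u < lam.ord

/-- `λ` is a Magidor cardinal: `λ → [λ]^{ℵ₀-bd}_λ`, i.e. for every coloring
`f : [λ]^{ℵ₀-bd} → λ` there is `A ⊆ λ` of full cardinality `λ` such that `f`
omits some color `γ < λ` on the countable bounded subsets of `A`. -/
def IsMagidorCard (lam : Cardinal.{0}) : Prop :=
  ∀ f : Set Ordinal.{0} → Ordinal.{0},
    (∀ u, BddCtbl lam u → f u < lam.ord) →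
    ∃ A : Set Ordinal.{0}, A ⊆ Set.Iio lam.ord ∧ #A = Cardinal.lift.{1} lam ∧
      ∃ γ < lam.ord, ∀ u ⊆ A, BddCtbl lam u → f u ≠ γ

noncomputable def pickFam (S : Ordinal.{0} → Set (Set Ordinal.{0})) : Ordinal.{0} → Set Ordinal.{0}
  | α => Classical.epsilon fun v => v ∈ S α ∧ ∀ β, β < α → pickFam S β ≠ v
termination_by α => α
decreasing_by assumption

lemma pickFam_spec (S : Ordinal.{0} → Set (Set Ordinal.{0})) (α : Ordinal.{0})
    (hne : ∃ v, v ∈ S α ∧ ∀ β, β < α → pickFam S β ≠ v) :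
    pickFam S α ∈ S α ∧ ∀ β, β < α → pickFam S β ≠ pickFam S α := by
  rw [pickFam]
  exact Classical.epsilon_spec hne

lemma pickFam_nonempty (lam : Cardinal.{0}) (S : Ordinal.{0} → Set (Set Ordinal.{0}))
    (α : Ordinal.{0}) (hα : α < lam.ord) (hbig : Cardinal.lift.{1} lam < #(S α)) :
    ∃ v, v ∈ S α ∧ ∀ β, β < α → pickFam S β ≠ v := by
  by_contra h
  push_neg at h
  have hsub : S α ⊆ pickFam S '' (Set.Iio α) := by
    intro v hv
    obtain ⟨β, hβ, hEq⟩ := h v hv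
    exact ⟨β, hβ, hEq⟩
  have h1 : #(S α) ≤ #(pickFam S '' (Set.Iio α)) := mk_le_mk_of_subset hsub
  have h2 : #(pickFam S '' (Set.Iio α)) ≤ #(Set.Iio α) := mk_image_le
  have h3 : #(Set.Iio α) = Cardinal.lift.{1} α.card := Ordinal.mk_Iio_ordinal α
  have h4 : α.card ≤ lam := by
    simpa using Ordinal.card_le_card hα.le
  have : #(S α) ≤ Cardinal.lift.{1} lam := by
    rw [h3] at h2
    exact h1.trans (h2.trans (Cardinal.lift_le.mpr h4))
  exact absurd hbig this.not_gt

/-- given families `X i` (for `i < λ`) of countable bounded subsets of an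
infinite cardinal `λ`, each of cardinality `> λ`, there is `d : [λ]^{ℵ₀-bd} → λ` whose
image on each `X i` is all of `λ`. -/
theorem exists_onto_coloring (lam : Cardinal.{0}) (hlam : Cardinal.aleph0 ≤ lam)
    (X : Ordinal.{0} → Set (Set Ordinal.{0}))
    (hXsub : ∀ i < lam.ord, X i ⊆ {u | BddCtbl lam u})
    (hXbig : ∀ i < lam.ord, Cardinal.lift.{1} lam < #(X i)) :
    ∃ d : Set Ordinal.{0} → Ordinal.{0},
      (∀ u, BddCtbl lam u → d u < lam.ord) ∧
      ∀ i < lam.ord, ∀ γ < lam.ord, ∃ u ∈ X i, d u = γ := by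
  classical
  have hpos : (0 : Ordinal) < lam.ord := by
    have h := Cardinal.ord_lt_ord.mpr (Cardinal.aleph0_pos.trans_le hlam)
    simpa using h
  have hcard : #(Set.Iio lam.ord × Set.Iio lam.ord) = #(Set.Iio lam.ord) := by
    rw [Cardinal.mk_prod, Cardinal.lift_id,
      Ordinal.mk_Iio_ordinal, Cardinal.card_ord, ← Cardinal.lift_mul,
      Cardinal.mul_eq_self hlam]
  obtain ⟨e⟩ := Cardinal.eq.mp hcard.symm
  set S : Ordinal.{0} → Set (Set Ordinal.{0}) :=
    fun α => if h : α < lam.ord then X ((e ⟨α, h⟩).1 : Ordinal) else Set.univ with hS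
  have hSeq : ∀ (α : Ordinal) (hα : α < lam.ord), S α = X ((e ⟨α, hα⟩).1 : Ordinal) := by
    intro α hα
    simp only [hS, dif_pos hα]
  have hSbig : ∀ α, ∀ hα : α < lam.ord, Cardinal.lift.{1} lam < #(S α) := by
    intro α hα
    rw [hSeq α hα]
    exact hXbig _ (e ⟨α, hα⟩).1.2
  have spec : ∀ α, ∀ hα : α < lam.ord,
      pickFam S α ∈ S α ∧ ∀ β, β < α → pickFam S β ≠ pickFam S α := by
    intro α hα
    exact pickFam_spec S α (pickFam_nonempty lam S α hα (hSbig α hα))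
  have inj : ∀ α β, α < lam.ord → β < lam.ord → pickFam S α = pickFam S β → α = β := by
    intro α β hα hβ hEq
    rcases lt_trichotomy α β with h | h | h
    · exact absurd hEq ((spec β hβ).2 α h)
    · exact h
    · exact absurd hEq.symm ((spec α hα).2 β h)
  refine ⟨fun v =>
    if h : ∃ α : Set.Iio lam.ord, pickFam S α = v then ((e h.choose).2 : Ordinal) else 0,
    ?_, ?_⟩
  · intro u _
    by_cases h : ∃ α : Set.Iio lam.ord, pickFam S α = u
    · beta_reduce
      rw [dif_pos h]
      exact (e h.choose).2.2
    · beta_reduce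
      rw [dif_neg h]
      exact hpos
  · intro i hi γ hγ
    set p : Set.Iio lam.ord × Set.Iio lam.ord := (⟨i, hi⟩, ⟨γ, hγ⟩) with hp
    set a : Set.Iio lam.ord := e.symm p with ha
    refine ⟨pickFam S a, ?_, ?_⟩
    · have h1 := (spec a a.2).1
      rw [hSeq a a.2] at h1
      have he : e ⟨(a : Ordinal), a.2⟩ = p := by
        have h2 : (⟨(a : Ordinal), a.2⟩ : Set.Iio lam.ord) = a := rfl
        rw [h2, ha, Equiv.apply_symm_apply]
      rw [he] at h1
      exact h1
    · have hex : ∃ α : Set.Iio lam.ord, pickFam S α = pickFam S a := ⟨a, rfl⟩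
      beta_reduce
      rw [dif_pos hex]
      have hcs := hex.choose_spec
      have hch : hex.choose = a := by
        ext1
        exact inj _ _ hex.choose.2 a.2 hcs
      rw [hch, ha, Equiv.apply_symm_apply]
end

section
/- There exists a function c₀ assigning to every infinite subset of ℕ a pair (ζ, ε) with ζ < 2^{ℵ0} and ε < ω₁, such that for every infinite b ⊆ ℕ and every pair (ζ, ε) with ζ < 2^{ℵ0} and ε < ω₁, there exists an infinite subset v ⊆ b with c₀(v) = (ζ, ε); that is, c₀ restricted to the infinite subsets of any fixed infinite b ⊆ ℕ is surjective onto 2^{ℵ0} × ω₁. -/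
/-!
There are only `𝔠` requirements `(b, ζ, ε)`, and every infinite `b ⊆ ℕ` has `𝔠` infinite
subsets. Enumerating the requirements in order type `𝔠`, each one has fewer than `𝔠`
predecessors, so transfinite recursion picks pairwise distinct infinite `v_{b,ζ,ε} ⊆ b`.
Colour `v_{b,ζ,ε}` by `(ζ, ε)` and every other set arbitrarily.
-/

open Cardinal Set

namespace Cardinal

universe u

theorem exists_injective_forall_mem_of_isWellOrder {ι X : Type u} (r : ι → ι → Prop)
    [IsWellOrder ι r] (S : ι → Set X) (hS : ∀ i, #{ j // r j i } < #(S i)) :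
    ∃ f : ι → X, Function.Injective f ∧ ∀ i, f i ∈ S i := by
  have fresh (i : ι) (P : Set X) (hP : #P ≤ #{ j // r j i }) : (S i \ P).Nonempty :=
    nonempty_of_not_subset fun hSP => (hS i).not_ge (hP.trans' (mk_le_mk_of_subset hSP))
  let f : ι → X := (IsWellFounded.wf (r := r)).fix fun i g =>
    (fresh i (range fun j : { j // r j i } => g j j.2) mk_range_le).some
  have hf (i : ι) : f i ∈ S i \ range fun j : { j // r j i } => f j := by
    rw [show f i = _ from WellFounded.fix_eq _ _ i]
    exact Nonempty.some_mem _
  refine ⟨f, fun i j hij => ?_, fun i => (hf i).1⟩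
  rcases trichotomous_of r i j with h | h | h
  · exact absurd ⟨⟨i, h⟩, hij⟩ (hf j).2
  · exact h
  · exact absurd ⟨⟨j, h⟩, hij.symm⟩ (hf i).2

-- Enumerated in order type `#ι.ord`, every index has fewer than `#ι` predecessors.
theorem exists_injective_forall_mem {ι X : Type u} (S : ι → Set X)
    (hS : ∀ i, #ι ≤ #(S i)) :
    ∃ f : ι → X, Function.Injective f ∧ ∀ i, f i ∈ S i := by
  obtain ⟨r, _, hr⟩ := exists_ord_eq ι
  exact exists_injective_forall_mem_of_isWellOrder r S fun i =>
    (Ordinal.card_typein (r := r) i ▸ card_typein_lt i hr).trans_le (hS i)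

theorem exists_forall_surjOn {B C X : Type u} [Nonempty C] (S : B → Set X)
    (hS : ∀ b, #(B × C) ≤ #(S b)) : ∃ c : X → C, ∀ b, SurjOn c (S b) Set.univ := by
  obtain ⟨f, hf, hfS⟩ := exists_injective_forall_mem (fun t : B × C => S t.1) fun t => hS t.1
  refine ⟨Function.extend f Prod.snd fun _ => Classical.arbitrary C, fun b y _ => ?_⟩
  exact ⟨f (b, y), hfS (b, y), hf.extend_apply _ _ _⟩

end Cardinal

theorem Set.Infinite.two_power_le_mk_infinite_subsets {α : Type*} {s : Set α} (hs : s.Infinite) :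
    2 ^ #s ≤ #{ t : Set α | t ⊆ s ∧ t.Infinite } := by
  have : Infinite s := hs.to_subtype
  have hfinite : #{ t : Set s | t.Finite } < #(Set s) := by
    refine (mk_le_of_surjective (f := fun u : Finset s => (⟨u, u.finite_toSet⟩ :
      { t : Set s | t.Finite })) fun t => ⟨t.2.toFinset, by simp⟩).trans_lt ?_
    rw [mk_finset_of_infinite, mk_set]
    exact cantor _
  calc 2 ^ #s = #({ t : Set s | t.Finite }ᶜ : Set (Set s)) := by
        rw [mk_compl_of_infinite _ hfinite, mk_set]
    _ ≤ #{ t : Set α | t ⊆ s ∧ t.Infinite } := by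
        refine mk_le_of_injective (f := fun t => ⟨(↑) '' t.1, Subtype.coe_image_subset s t.1,
          Set.Infinite.image Subtype.val_injective.injOn t.2⟩) fun t t' h => ?_
        exact Subtype.ext (image_injective.2 Subtype.val_injective (congrArg Subtype.val h))

theorem continuum_le_mk_infinite_subsets {b : Set ℕ} (hb : b.Infinite) :
    𝔠 ≤ #{ v : Set ℕ | v ⊆ b ∧ v.Infinite } := by
  have : Infinite b := hb.to_subtype
  simpa [mk_eq_aleph0 b] using hb.two_power_le_mk_infinite_subsets

/-- there is a function `c₀` assigning to the infinite subsets of `ℕ`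
pairs `(ζ, ε)` with `ζ < 2^{ℵ₀}` and `ε < ω₁`, such that on the infinite subsets of any
fixed infinite `b ⊆ ℕ`, `c₀` attains every such pair `(ζ, ε)`. -/
theorem exists_pair_coloring :
    ∃ c₀ : Set ℕ → Ordinal.{0} × Ordinal.{0},
      (∀ v : Set ℕ, v.Infinite →
        (c₀ v).1 < Cardinal.continuum.ord ∧ (c₀ v).2 < (Cardinal.aleph 1).ord) ∧
      ∀ b : Set ℕ, b.Infinite →
        ∀ ζ < Cardinal.continuum.ord, ∀ ε < (Cardinal.aleph 1).ord,
          ∃ v ⊆ b, v.Infinite ∧ c₀ v = (ζ, ε) := by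
  let Colour := continuum.{0}.ord.ToType × (aleph.{0} 1).ord.ToType
  have : Nonempty Colour := by
    simp only [Colour, nonempty_prod, Ordinal.nonempty_toType_iff, ne_eq, ord_eq_zero]
    exact ⟨continuum_ne_zero, (aleph_pos 1).ne'⟩
  have hcard : #({ b : Set ℕ // b.Infinite } × Colour) ≤ 𝔠 := by
    have hB : #{ b : Set ℕ // b.Infinite } ≤ 𝔠 := by
      simpa using mk_subtype_le (Set.Infinite : Set ℕ → Prop)
    simp only [Colour, mk_prod, mk_ord_toType, lift_id]
    exact mul_le_of_le aleph0_le_continuum hB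
      (mul_le_of_le aleph0_le_continuum le_rfl aleph_one_le_continuum)
  obtain ⟨c, hc⟩ := exists_forall_surjOn (C := Colour)
    (fun b : { b : Set ℕ // b.Infinite } => { v : Set ℕ | v ⊆ b ∧ v.Infinite })
    fun b => hcard.trans (continuum_le_mk_infinite_subsets b.2)
  refine ⟨fun v => (Ordinal.ToType.mk.symm (c v).1, Ordinal.ToType.mk.symm (c v).2),
    fun v _ => ⟨(Ordinal.ToType.mk.symm _).2, (Ordinal.ToType.mk.symm _).2⟩,
    fun b hb ζ hζ ε hε => ?_⟩
  obtain ⟨v, ⟨hvb, hv⟩, hcv⟩ :=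
    hc ⟨b, hb⟩ (mem_univ (Ordinal.ToType.mk ⟨ζ, hζ⟩, Ordinal.ToType.mk ⟨ε, hε⟩))
  exact ⟨v, hvb, hv, by simp [hcv]⟩
end

section
/- Let θ be an infinite cardinal and let F be a filter over a cardinal λ which is not (ω,θ)-regular. Then there is no sequence ⟨f_ε : ε < θ⟩ of functions f_ε : λ → λ such that (i) f_ζ(α) ≤ f_ε(α) for all ε ≤ ζ < θ and all α < λ, and (ii) for every ε < θ the set {α < λ : f_{ε+1}(α) < f_ε(α)} belongs to F. -/
open Cardinal Set

/-- `F` is a filter over `λ`: a nonempty collection of subsets of `λ` closed under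
supersets (within `λ`) and finite (binary) intersections, with `∅ ∉ F`. -/
def IsFilterOn (lam : Cardinal.{0}) (F : Set (Set Ordinal.{0})) : Prop :=
  F.Nonempty ∧ (∀ x ∈ F, x ⊆ Set.Iio lam.ord) ∧
    (∀ x ∈ F, ∀ y, x ⊆ y → y ⊆ Set.Iio lam.ord → y ∈ F) ∧
    (∀ x ∈ F, ∀ y ∈ F, x ∩ y ∈ F) ∧ ∅ ∉ F

/-- `F` is a Magidor filter over `λ`: a uniform filter over `λ` containing all
end-segments of `λ`, such that every coloring `c : [λ]^{ℵ₀-bd} → λ` omits some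
color `γ < λ` on the countable bounded subsets of some member of `F`. -/
def IsMagidorFilter (lam : Cardinal.{0}) (F : Set (Set Ordinal.{0})) : Prop :=
  IsFilterOn lam F ∧
  (∀ x ∈ F, #x = Cardinal.lift.{1} lam) ∧
  (∀ α < lam.ord, {β | α ≤ β ∧ β < lam.ord} ∈ F) ∧
  (∀ c : Set Ordinal.{0} → Ordinal.{0}, (∀ u, BddCtbl lam u → c u < lam.ord) →
    ∃ x ∈ F, ∃ γ < lam.ord, ∀ u ⊆ x, BddCtbl lam u → c u ≠ γ)

/-- `F` is not `(ω,θ)`-regular: every subfamily `A ⊆ F` of cardinality `θ` has a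
countably infinite subfamily `B` with nonempty intersection. -/
def NotOmegaRegular (F : Set (Set Ordinal.{0})) (θ : Cardinal.{0}) : Prop :=
  ∀ A ⊆ F, #A = Cardinal.lift.{1} θ →
    ∃ B ⊆ A, B.Countable ∧ B.Infinite ∧ (⋂₀ B).Nonempty

/-!
Put `A ε = {α | f (ε + 1) α < f ε α}`. Either `ε ↦ A ε` has an infinite fiber over `θ`, whose common
value is a nonempty member of `F`, or it has `θ` distinct values, and non-regularity gives countably
many of them with a common point. Either way some `α` lies in `A ε` for infinitely many `ε < θ`.
Along these `ε` the ordinals `f ε α` strictly decrease, which is impossible.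
-/

universe u

theorem Set.Infinite.exists_infinite_fiber_or_mk_image_eq {α β : Type u} {s : Set α}
    (hs : s.Infinite) (g : α → β) :
    (∃ b, (s ∩ g ⁻¹' {b}).Infinite) ∨ #(g '' s) = #s := by
  refine or_iff_not_imp_right.2 fun hne => ?_
  have : Infinite s := hs.to_subtype
  obtain ⟨⟨b, _⟩, hb⟩ := Cardinal.exists_infinite_fiber (s.imageFactorization g)
    (lt_of_le_of_ne Cardinal.mk_image_le hne)
  refine ⟨b, ?_⟩
  have := (Set.infinite_coe_iff.1 hb).image Subtype.val_injective.injOn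
  refine this.mono ?_
  rintro _ ⟨⟨a, ha⟩, hab, rfl⟩
  exact ⟨ha, congrArg Subtype.val hab⟩

theorem finite_setOf_lt_and_apply_add_one_lt {β : Type*} [Preorder β] [WellFoundedLT β]
    {o : Ordinal} {h : Ordinal → β} (hh : ∀ ε ζ, ε ≤ ζ → ζ < o → h ζ ≤ h ε) :
    {ε | ε < o ∧ h (ε + 1) < h ε}.Finite := by
  set S := {ε | ε < o ∧ h (ε + 1) < h ε}
  have hanti : StrictAnti (S.domRestrict h) := fun ε ζ hεζ =>
    calc h ζ ≤ h (ε + 1) := hh _ _ (Order.add_one_le_of_lt hεζ) ζ.2.1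
      _ < h ε := ε.2.2
  have := hanti.wellFoundedGT
  exact Set.finite_coe_iff.1 (Finite.of_wellFoundedLT_wellFoundedGT S)

theorem NotOmegaRegular.exists_infinite_setOf_mem {F : Set (Set Ordinal.{0})} {θ : Cardinal.{0}}
    (hirr : NotOmegaRegular F θ) (hF : ∅ ∉ F) (hθ : ℵ₀ ≤ θ) {A : Ordinal.{0} → Set Ordinal.{0}}
    (hA : ∀ ε < θ.ord, A ε ∈ F) : ∃ α, {ε | ε < θ.ord ∧ α ∈ A ε}.Infinite := by
  have hmk : #(Iio θ.ord) = Cardinal.lift.{1} θ := by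
    rw [Cardinal.mk_Iio_ordinal, Cardinal.card_ord]
  have hinf : (Iio θ.ord).Infinite := by
    rw [← Set.infinite_coe_iff, Cardinal.infinite_iff, hmk]
    exact Cardinal.aleph0_le_lift.2 hθ
  rcases hinf.exists_infinite_fiber_or_mk_image_eq A with ⟨b, hb⟩ | himage
  · obtain ⟨ε₀, hε₀, rfl⟩ := hb.nonempty
    obtain ⟨α, hα⟩ := Set.nonempty_iff_ne_empty.2 fun h => hF (h ▸ hA ε₀ hε₀)
    refine ⟨α, hb.mono ?_⟩
    rintro ε ⟨hε, hAε : A ε = A ε₀⟩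
    exact ⟨hε, hAε ▸ hα⟩
  · have hAF : A '' Iio θ.ord ⊆ F := by rintro _ ⟨ε, hε, rfl⟩; exact hA ε hε
    obtain ⟨B, hBA, -, hB, α, hα⟩ := hirr _ hAF (himage.trans hmk)
    refine ⟨α, Set.Infinite.of_image A (hB.mono fun b hb => ?_)⟩
    obtain ⟨ε, hε, rfl⟩ := hBA hb
    exact ⟨ε, ⟨hε, hα _ hb⟩, rfl⟩

/-- if `F` is a filter over `λ` which is not `(ω,θ)`-regular (`θ` an
infinite cardinal), then there is no sequence `⟨f_ε : ε < θ⟩` of functions `λ → λ`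
which is pointwise non-increasing in `ε` and such that each set
`{α < λ : f_{ε+1}(α) < f_ε(α)}` belongs to `F`. -/
theorem no_descending_sequence (lam θ : Cardinal.{0}) (hθ : Cardinal.aleph0 ≤ θ)
    (F : Set (Set Ordinal.{0})) (hF : IsFilterOn lam F)
    (hirr : NotOmegaRegular F θ) :
    ¬ ∃ f : Ordinal.{0} → Ordinal.{0} → Ordinal.{0},
      (∀ ε < θ.ord, ∀ α < lam.ord, f ε α < lam.ord) ∧
      (∀ ε ζ : Ordinal.{0}, ε ≤ ζ → ζ < θ.ord → ∀ α < lam.ord, f ζ α ≤ f ε α) ∧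
      (∀ ε < θ.ord, {α | α < lam.ord ∧ f (ε + 1) α < f ε α} ∈ F) := by
  rintro ⟨f, -, hmono, hdrop⟩
  obtain ⟨α, hα⟩ := hirr.exists_infinite_setOf_mem hF.2.2.2.2 hθ hdrop
  obtain ⟨-, -, hαlt, -⟩ := hα.nonempty
  refine hα ((finite_setOf_lt_and_apply_add_one_lt (h := fun ε => f ε α)
    fun ε ζ hεζ hζ => hmono ε ζ hεζ hζ α hαlt).subset ?_)
  exact fun ε ⟨hε, _, hfα⟩ => ⟨hε, hfα⟩
end

section
/- Let λ be a cardinal, let θ < λ be a regular infinite cardinal, and let F be a uniform ultrafilter over λ which is not (ω,θ)-regular. Then there exists a function g : λ → λ which is monotonically increasing, unbounded in λ, and almost one-to-one with respect to θ, and which is <_F-minimal among such functions: there is no h : λ → λ which is monotonically increasing, unbounded in λ, almost one-to-one with respect to θ, and satisfies h <_F g. -/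
open Cardinal Set

/-- `g : λ → λ` is monotonically increasing (below `λ`). -/
def MonoIncOn (lam : Cardinal.{0}) (g : Ordinal.{0} → Ordinal.{0}) : Prop :=
  ∀ α β : Ordinal.{0}, α ≤ β → β < lam.ord → g α ≤ g β

/-- the range of `g` on `λ` is unbounded in `λ`. -/
def UnbddIn (lam : Cardinal.{0}) (g : Ordinal.{0} → Ordinal.{0}) : Prop :=
  ∀ β < lam.ord, ∃ α < lam.ord, β ≤ g α

/-- `g` is almost one-to-one with respect to `θ`: every fiber `g⁻¹({γ})` (for `γ < λ`)
has cardinality `< θ`. -/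
def AlmostInj (lam θ : Cardinal.{0}) (g : Ordinal.{0} → Ordinal.{0}) : Prop :=
  ∀ γ < lam.ord, #{α : Ordinal.{0} // α < lam.ord ∧ g α = γ} < Cardinal.lift.{1} θ

/-- `g` is a function from `λ` to `λ` which is monotonically increasing, unbounded
in `λ`, and almost one-to-one with respect to `θ`. -/
def GoodFn (lam θ : Cardinal.{0}) (g : Ordinal.{0} → Ordinal.{0}) : Prop :=
  (∀ α < lam.ord, g α < lam.ord) ∧ MonoIncOn lam g ∧ UnbddIn lam g ∧ AlmostInj lam θ g

/-- `f <_F g` : the set of `α < λ` with `f α < g α` belongs to `F`. -/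
def ltF (lam : Cardinal.{0}) (F : Set (Set Ordinal.{0}))
    (f g : Ordinal.{0} → Ordinal.{0}) : Prop :=
  {α | α < lam.ord ∧ f α < g α} ∈ F

noncomputable def gBody (step : (Ordinal.{0} → Ordinal.{0}) → Ordinal.{0} → Ordinal.{0})
    (ξ : Ordinal.{0}) (ih : ∀ η, η < ξ → Ordinal.{0} → Ordinal.{0}) :
    Ordinal.{0} → Ordinal.{0} :=
  fun α => min (step (fun β => sInf (insert β {x | ∃ η, ∃ h : η < ξ, ih η h β = x})) α)
    (sInf (insert α {x | ∃ η, ∃ h : η < ξ, ih η h α = x}))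

noncomputable def gSeq (step : (Ordinal.{0} → Ordinal.{0}) → Ordinal.{0} → Ordinal.{0}) :
    Ordinal.{0} → Ordinal.{0} → Ordinal.{0} :=
  WellFounded.fix Ordinal.lt_wf (gBody step)

noncomputable def mSeq (step : (Ordinal.{0} → Ordinal.{0}) → Ordinal.{0} → Ordinal.{0})
    (ξ : Ordinal.{0}) : Ordinal.{0} → Ordinal.{0} :=
  fun β => sInf (insert β {x | ∃ η, ∃ h : η < ξ, gSeq step η β = x})

theorem gSeq_eq (step : (Ordinal.{0} → Ordinal.{0}) → Ordinal.{0} → Ordinal.{0})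
    (ξ α : Ordinal.{0}) :
    gSeq step ξ α = min (step (mSeq step ξ) α) (mSeq step ξ α) :=
  congrFun (WellFounded.fix_eq Ordinal.lt_wf (gBody step) ξ) α

/-- if `θ < λ` is regular and `F` is a uniform ultrafilter over `λ`
which is not `(ω,θ)`-regular, then there is a monotonically increasing, unbounded,
almost one-to-one (w.r.t. `θ`) function `g : λ → λ` which is `<_F`-minimal among such
functions. -/
theorem exists_minimal_projection (lam θ : Cardinal.{0})
    (hθreg : θ.IsRegular) (hθlam : θ < lam)
    (F : Set (Set Ordinal.{0})) (hF : IsFilterOn lam F)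
    (hunif : ∀ x ∈ F, #x = Cardinal.lift.{1} lam)
    (hultra : ∀ x ⊆ Set.Iio lam.ord, x ∈ F ∨ Set.Iio lam.ord \ x ∈ F)
    (hirr : NotOmegaRegular F θ) :
    ∃ g : Ordinal.{0} → Ordinal.{0}, GoodFn lam θ g ∧
      ∀ h : Ordinal.{0} → Ordinal.{0}, GoodFn lam θ h → ¬ ltF lam F h g := by
  
  classical
  by_contra hcon
  push_neg at hcon
  obtain ⟨hFne, hFsub, hFsup, hFinter, hFempty⟩ := hF
  have hθ0 : ℵ₀ ≤ θ := hθreg.aleph0_le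
  have hΘ0 : ℵ₀ ≤ Cardinal.lift.{1} θ := aleph0_le_lift.2 hθ0
  have hΘreg : (Cardinal.lift.{1} θ).IsRegular := by
    refine ⟨hΘ0, ?_⟩
    rw [← Cardinal.lift_ord, ← Ordinal.lift_cof, hθreg.cof_eq]
  have hmkIio : ∀ o : Ordinal.{0}, #(Set.Iio o) = Cardinal.lift.{1} o.card :=
    Ordinal.mk_Iio_ordinal
  have hmkL : #(Set.Iio lam.ord) = Cardinal.lift.{1} lam := by
    rw [hmkIio, Cardinal.card_ord]
  have hmkT : #(Set.Iio θ.ord) = Cardinal.lift.{1} θ := by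
    rw [hmkIio, Cardinal.card_ord]
  -- step function
  let step : (Ordinal.{0} → Ordinal.{0}) → Ordinal.{0} → Ordinal.{0} :=
    fun f => if h : GoodFn lam θ f then Classical.choose (hcon f h) else f
  have hstep : ∀ f, GoodFn lam θ f → GoodFn lam θ (step f) ∧ ltF lam F (step f) f := by
    intro f hf
    have heq : step f = Classical.choose (hcon f hf) := dif_pos hf
    rw [heq]
    exact Classical.choose_spec (hcon f hf)
  set G : Ordinal.{0} → Ordinal.{0} → Ordinal.{0} := gSeq step with hGdef
  set M : Ordinal.{0} → Ordinal.{0} → Ordinal.{0} := mSeq step with hMdef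
  have hGM : ∀ ξ α, G ξ α = min (step (M ξ) α) (M ξ α) := gSeq_eq step
  have hM_le : ∀ ξ β, M ξ β ≤ β := fun ξ β => csInf_le' (Set.mem_insert _ _)
  have hM_le_G : ∀ ξ η, η < ξ → ∀ β, M ξ β ≤ G η β := fun ξ η h β =>
    csInf_le' (Set.mem_insert_of_mem _ ⟨η, h, rfl⟩)
  have hM_mem : ∀ ξ β, M ξ β = β ∨ ∃ η, η < ξ ∧ G η β = M ξ β := by
    intro ξ β
    have hmem := csInf_mem (s := insert β {x | ∃ η, ∃ _ : η < ξ, G η β = x})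
      ⟨β, Set.mem_insert _ _⟩
    rcases Set.mem_insert_iff.1 hmem with h | ⟨η, hη, h⟩
    · exact Or.inl h
    · exact Or.inr ⟨η, hη, h⟩
  have hG_le_M : ∀ ξ α, G ξ α ≤ M ξ α := fun ξ α => by
    rw [hGM]; exact min_le_right _ _
  -- unboundedness from almost injectivity
  have hUnb : ∀ f : Ordinal.{0} → Ordinal.{0}, (∀ α < lam.ord, f α < lam.ord) →
      AlmostInj lam θ f → UnbddIn lam f := by
    intro f hmaps hinj β hβ
    by_contra hno
    push_neg at hno
    have hcov : Set.Iio lam.ord ⊆ ⋃ γ ∈ Set.Iio β, {α | α < lam.ord ∧ f α = γ} := by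
      intro α hα
      exact Set.mem_biUnion (hno α hα) ⟨hα, rfl⟩
    have h1 : Cardinal.lift.{1} lam ≤ #(⋃ γ ∈ Set.Iio β, {α | α < lam.ord ∧ f α = γ}) :=
      hmkL ▸ Cardinal.mk_le_mk_of_subset hcov
    rw [Set.biUnion_eq_iUnion] at h1
    have h2 := (Cardinal.mk_iUnion_le_sum_mk
      (f := fun γ : Set.Iio β => {α : Ordinal.{0} | α < lam.ord ∧ f α = ↑γ}))
    have h3 : Cardinal.sum (fun γ : Set.Iio β => #{α : Ordinal.{0} | α < lam.ord ∧ f α = ↑γ})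
        ≤ Cardinal.sum (fun _ : Set.Iio β => Cardinal.lift.{1} θ) :=
      Cardinal.sum_le_sum _ _ (fun γ => le_of_lt (hinj ↑γ (lt_trans γ.2 hβ)))
    rw [Cardinal.sum_const'] at h3
    have h4 : #(Set.Iio β) * Cardinal.lift.{1} θ < Cardinal.lift.{1} lam := by
      refine Cardinal.mul_lt_of_lt (aleph0_le_lift.2 (hθ0.trans hθlam.le)) ?_
        (Cardinal.lift_lt.2 hθlam)
      rw [hmkIio]
      exact Cardinal.lift_lt.2 (Cardinal.lt_ord.1 hβ)
    exact absurd ((h1.trans h2).trans h3) (not_le.2 h4)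
  -- main induction
  have key : ∀ ξ, ξ < θ.ord → GoodFn lam θ (M ξ) ∧ GoodFn lam θ (G ξ) := by
    intro ξ
    induction ξ using Ordinal.induction with
    | _ ξ IH =>
      intro hξθ
      have hMmaps : ∀ α < lam.ord, M ξ α < lam.ord := fun α hα =>
        lt_of_le_of_lt (hM_le ξ α) hα
      have hMmono : MonoIncOn lam (M ξ) := by
        intro α β hαβ hβ
        rcases hM_mem ξ β with h | ⟨η, hη, h⟩
        · rw [h]; exact (hM_le ξ α).trans hαβ
        · rw [← h]
          exact (hM_le_G ξ η hη α).trans (((IH η hη (hη.trans hξθ)).2).2.1 α β hαβ hβ)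
      have hMinj : AlmostInj lam θ (M ξ) := by
        intro γ hγ
        have hsub : {α : Ordinal.{0} | α < lam.ord ∧ M ξ α = γ} ⊆
            insert γ (⋃ η : Set.Iio ξ, {α : Ordinal.{0} | α < lam.ord ∧ G ↑η α = γ}) := by
          rintro α ⟨hα, hval⟩
          rcases hM_mem ξ α with h | ⟨η, hη, h⟩
          · exact Set.mem_insert_iff.2 (Or.inl (h.symm.trans hval))
          · exact Set.mem_insert_iff.2 (Or.inr (Set.mem_iUnion.2
              ⟨⟨η, hη⟩, hα, h.trans hval⟩))
        refine lt_of_le_of_lt (Cardinal.mk_le_mk_of_subset hsub) ?_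
        refine lt_of_le_of_lt Cardinal.mk_insert_le ?_
        refine Cardinal.add_lt_of_lt hΘ0 ?_ (lt_of_lt_of_le Cardinal.one_lt_aleph0 hΘ0)
        refine lt_of_le_of_lt Cardinal.mk_iUnion_le_sum_mk ?_
        refine Cardinal.sum_lt_of_isRegular hΘreg ?_ ?_
        · rw [hmkIio]
          exact Cardinal.lift_lt.2 (Cardinal.lt_ord.1 hξθ)
        · intro η
          exact ((IH ↑η η.2 (lt_trans η.2 hξθ)).2).2.2.2 γ hγ
      have hMgood : GoodFn lam θ (M ξ) := ⟨hMmaps, hMmono, hUnb _ hMmaps hMinj, hMinj⟩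
      obtain ⟨hsg, -⟩ := hstep (M ξ) hMgood
      refine ⟨hMgood, ?_⟩
      have hGmaps : ∀ α < lam.ord, G ξ α < lam.ord := fun α hα =>
        lt_of_le_of_lt (hG_le_M ξ α) (hMmaps α hα)
      have hGmono : MonoIncOn lam (G ξ) := by
        intro α β hαβ hβ
        rw [hGM, hGM]
        exact le_min ((min_le_left _ _).trans (hsg.2.1 α β hαβ hβ))
          ((min_le_right _ _).trans (hMmono α β hαβ hβ))
      have hGinj : AlmostInj lam θ (G ξ) := by
        intro γ hγ
        have hsub : {α : Ordinal.{0} | α < lam.ord ∧ G ξ α = γ} ⊆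
            {α : Ordinal.{0} | α < lam.ord ∧ step (M ξ) α = γ} ∪
            {α : Ordinal.{0} | α < lam.ord ∧ M ξ α = γ} := by
          rintro α ⟨hα, hval⟩
          rw [hGM] at hval
          rcases min_cases (step (M ξ) α) (M ξ α) with ⟨h, -⟩ | ⟨h, -⟩
          · exact Or.inl ⟨hα, h.symm.trans hval⟩
          · exact Or.inr ⟨hα, h.symm.trans hval⟩
        refine lt_of_le_of_lt ((Cardinal.mk_le_mk_of_subset hsub).trans
          (Cardinal.mk_union_le _ _)) ?_
        exact Cardinal.add_lt_of_lt hΘ0 (hsg.2.2.2 γ hγ) (hMinj γ hγ)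
      exact ⟨hGmaps, hGmono, hUnb _ hGmaps hGinj, hGinj⟩
  -- the F-large sets
  set Bs : Ordinal.{0} → Set Ordinal.{0} :=
    fun ξ => {α | α < lam.ord ∧ G ξ α < M ξ α} with hBsdef
  have hBsub : ∀ ξ, Bs ξ ⊆ Set.Iio lam.ord := fun ξ α hα => hα.1
  have hBF : ∀ ξ, ξ < θ.ord → Bs ξ ∈ F := by
    intro ξ hξ
    have hlt := (hstep (M ξ) (key ξ hξ).1).2
    refine hFsup _ hlt _ ?_ (hBsub ξ)
    rintro α ⟨hα, h⟩
    refine ⟨hα, lt_of_le_of_lt ?_ h⟩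
    rw [hGM]; exact min_le_left _ _
  -- no infinite descent
  have desc : ∀ (φ : ℕ → Ordinal.{0}) (α : Ordinal.{0}), (∀ n, φ n < φ (n+1)) →
      (∀ n, α ∈ Bs (φ n)) → False := by
    intro φ α hmono hmem
    have hdec : ∀ n, G (φ (n+1)) α < G (φ n) α := fun n =>
      lt_of_lt_of_le (hmem (n+1)).2 (hM_le_G _ _ (hmono n) α)
    have hnever : ∀ x : Ordinal.{0}, ∀ n, G (φ n) α ≠ x := by
      intro x
      induction x using Ordinal.induction with
      | _ x IH2 =>
        intro n h
        exact IH2 (G (φ (n+1)) α) (h ▸ hdec n) (n+1) rfl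
    exact hnever (G (φ 0) α) 0 rfl
  -- increasing sequence in an infinite set of ordinals
  have mseq : ∀ I : Set Ordinal.{0}, I.Infinite →
      ∃ φ : ℕ → Ordinal.{0}, (∀ n, φ n ∈ I) ∧ ∀ n, φ n < φ (n+1) := by
    intro I hI
    let f : ℕ → Ordinal.{0} := fun n => Nat.rec (sInf I) (fun _ prev => sInf (I \ Set.Iic prev)) n
    have hfs : ∀ n, f (n+1) = sInf (I \ Set.Iic (f n)) := fun n => rfl
    have inv : ∀ n, f n ∈ I ∧ (I ∩ Set.Iic (f n)).Finite := by
      intro n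
      induction n with
      | zero =>
        refine ⟨csInf_mem hI.nonempty, Set.Finite.subset (Set.finite_singleton (sInf I)) ?_⟩
        rintro x ⟨hxI, hxle⟩
        exact le_antisymm hxle (csInf_le' hxI)
      | succ n ih =>
        have hne : (I \ Set.Iic (f n)).Nonempty := by
          by_contra h
          rw [Set.not_nonempty_iff_eq_empty, Set.diff_eq_empty] at h
          exact hI (ih.2.subset (fun x hx => ⟨hx, h hx⟩))
        have hmem : f (n+1) ∈ I \ Set.Iic (f n) := by rw [hfs]; exact csInf_mem hne
        refine ⟨hmem.1, ?_⟩
        refine Set.Finite.subset (ih.2.union (Set.finite_singleton (f (n+1)))) ?_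
        rintro x ⟨hxI, hxle⟩
        rcases le_or_gt x (f n) with hle | hle
        · exact Or.inl ⟨hxI, hle⟩
        · refine Or.inr ?_
          have hx : f (n+1) ≤ x := by
            rw [hfs]; exact csInf_le' ⟨hxI, not_le.2 hle⟩
          exact le_antisymm hxle hx
    have hne : ∀ n, (I \ Set.Iic (f n)).Nonempty := by
      intro n
      by_contra h
      rw [Set.not_nonempty_iff_eq_empty, Set.diff_eq_empty] at h
      exact hI ((inv n).2.subset (fun x hx => ⟨hx, h hx⟩))
    have hlt : ∀ n, f n < f (n+1) := by
      intro n
      have hmem : f (n+1) ∈ I \ Set.Iic (f n) := by rw [hfs]; exact csInf_mem (hne n)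
      exact not_le.1 hmem.2
    exact ⟨f, fun n => (inv n).1, hlt⟩
  -- the family of F-sets
  set A : Set (Set Ordinal.{0}) := Bs '' (Set.Iio θ.ord) with hAdef
  have hAF : A ⊆ F := by
    rintro v ⟨ξ, hξ, rfl⟩
    exact hBF ξ hξ
  have hAle : #A ≤ Cardinal.lift.{1} θ :=
    le_trans Cardinal.mk_image_le (le_of_eq hmkT)
  by_cases hA : #A = Cardinal.lift.{1} θ
  · obtain ⟨Bf, hBfA, hct, hinf, α, hα⟩ := hirr A hAF hA
    have hidx : ∀ b : Set Ordinal.{0}, b ∈ Bf → ∃ ξ, ξ < θ.ord ∧ Bs ξ = b := by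
      intro b hb
      obtain ⟨ξ, hξ, h⟩ := hBfA hb
      exact ⟨ξ, hξ, h⟩
    choose idx hidx1 hidx2 using hidx
    have hinj : Function.Injective (fun b : ↥Bf => idx ↑b b.2) := by
      intro b b' h
      apply Subtype.ext
      rw [← hidx2 ↑b b.2, ← hidx2 ↑b' b'.2]
      simp only at h
      rw [h]
    have hIinf : (Set.range (fun b : ↥Bf => idx ↑b b.2)).Infinite := by
      have : Infinite ↥Bf := Set.infinite_coe_iff.2 hinf
      exact Set.infinite_range_of_injective hinj
    obtain ⟨φ, hφI, hφm⟩ := mseq _ hIinf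
    refine desc φ α hφm ?_
    intro n
    obtain ⟨b, hb⟩ := hφI n
    simp only at hb
    rw [← hb, hidx2 ↑b b.2]
    exact Set.mem_sInter.1 hα ↑b b.2
  · have hAlt : #A < Cardinal.lift.{1} θ := lt_of_le_of_ne hAle hA
    by_cases hfin : ∀ v ∈ A, {ξ | ξ < θ.ord ∧ Bs ξ = v}.Finite
    · have hcov : Set.Iio θ.ord ⊆ ⋃ v ∈ A, {ξ | ξ < θ.ord ∧ Bs ξ = v} := by
        intro ξ hξ
        exact Set.mem_biUnion ⟨ξ, hξ, rfl⟩ ⟨hξ, rfl⟩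
      rcases lt_or_ge #A ℵ₀ with hsmall | hbig
      · have hAfin : A.Finite := Cardinal.lt_aleph0_iff_set_finite.1 hsmall
        have hIiofin : (Set.Iio θ.ord).Finite :=
          (hAfin.biUnion fun v hv => hfin v hv).subset hcov
        have hcard := hIiofin.lt_aleph0
        rw [hmkT] at hcard
        exact absurd hcard (not_lt.2 hΘ0)
      · have h1 : Cardinal.lift.{1} θ ≤ #(⋃ v ∈ A, {ξ | ξ < θ.ord ∧ Bs ξ = v}) :=
          hmkT ▸ Cardinal.mk_le_mk_of_subset hcov
        rw [Set.biUnion_eq_iUnion] at h1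
        have h2 := (Cardinal.mk_iUnion_le_sum_mk
          (f := fun v : ↥A => {ξ : Ordinal.{0} | ξ < θ.ord ∧ Bs ξ = ↑v}))
        have h3 : Cardinal.sum (fun v : ↥A => #{ξ : Ordinal.{0} | ξ < θ.ord ∧ Bs ξ = ↑v})
            ≤ Cardinal.sum (fun _ : ↥A => ℵ₀) :=
          Cardinal.sum_le_sum _ _ (fun v => le_of_lt ((hfin ↑v v.2).lt_aleph0))
        rw [Cardinal.sum_const'] at h3
        have h4 : #A * ℵ₀ = #A := Cardinal.mul_eq_left hbig hbig aleph0_ne_zero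
        have h5 := (h1.trans h2).trans h3
        rw [h4] at h5
        exact absurd h5 (not_le.2 hAlt)
    · push_neg at hfin
      obtain ⟨v, hvA, hvinf⟩ := hfin
      have hvne : v.Nonempty := by
        rw [Set.nonempty_iff_ne_empty]
        rintro rfl
        exact hFempty (hAF hvA)
      obtain ⟨α, hαv⟩ := hvne
      obtain ⟨φ, hφI, hφm⟩ := mseq _ hvinf
      refine desc φ α hφm ?_
      intro n
      have h := (hφI n).2
      rw [h]
      exact hαv
end

section
/- Let F be a Magidor filter over a cardinal λ, let θ < λ be an infinite cardinal, and let g : λ → λ be monotonically increasing, unbounded in λ, and almost one-to-one with respect to θ. Then G := {x ⊆ λ : g⁻¹[x] ∈ F} is a Magidor filter over λ. -/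
open Cardinal Set

/-!
Uniformity of `G` comes from the fibres of `g` being small: a member `x` of `G` with `|x| < λ`
would have preimage of size at most `|x| · θ < λ`. For the colouring property, pull a colouring
`c` back to `d v := c (g[v])`; a member `x ∈ F` omitting a colour for `d` has image `g[x] ∈ G`.
Each `u ∈ [g[x]]^{ℵ₀-bd}` is `g[v]` for some `v ⊆ x` on which `g` is injective, and `v` is again
countable, infinite and bounded, because `g` is monotone and unbounded: picking `α₀` with
`sup u < g α₀`, every element of `v` lies below `α₀`.
-/

def projection (lam : Cardinal.{0}) (g : Ordinal.{0} → Ordinal.{0})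
    (F : Set (Set Ordinal.{0})) : Set (Set Ordinal.{0}) :=
  {x | x ⊆ Iio lam.ord ∧ Iio lam.ord ∩ g ⁻¹' x ∈ F}

def IsUniform (lam : Cardinal.{0}) (F : Set (Set Ordinal.{0})) : Prop :=
  ∀ x ∈ F, #x = Cardinal.lift.{1} lam

def OmitsColors (lam : Cardinal.{0}) (F : Set (Set Ordinal.{0})) : Prop :=
  ∀ c : Set Ordinal.{0} → Ordinal.{0}, (∀ u, BddCtbl lam u → c u < lam.ord) →
    ∃ x ∈ F, ∃ γ < lam.ord, ∀ u ⊆ x, BddCtbl lam u → c u ≠ γ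

section

variable {lam : Cardinal.{0}} {F : Set (Set Ordinal.{0})} {g : Ordinal.{0} → Ordinal.{0}}

theorem IsFilterOn.Iio_mem (hF : IsFilterOn lam F) : Iio lam.ord ∈ F := by
  obtain ⟨⟨x, hx⟩, hsub, hsup, -⟩ := hF
  exact hsup x hx _ (hsub x hx) subset_rfl

theorem IsFilterOn.projection (hF : IsFilterOn lam F) (hmaps : ∀ α < lam.ord, g α < lam.ord) :
    IsFilterOn lam (projection lam g F) := by
  have hIio := hF.Iio_mem
  obtain ⟨-, -, hsup, hinter, hempty⟩ := hF
  refine ⟨⟨Iio lam.ord, subset_rfl, ?_⟩, fun x hx => hx.1, ?_, ?_, ?_⟩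
  · exact hsup _ hIio _ (fun α hα => ⟨hα, hmaps α hα⟩) inter_subset_left
  · rintro x ⟨-, hx⟩ y hxy hy
    exact ⟨hy, hsup _ hx _ (inter_subset_inter_right _ (preimage_mono hxy)) inter_subset_left⟩
  · rintro x ⟨hxlam, hx⟩ y ⟨-, hy⟩
    refine ⟨inter_subset_left.trans hxlam, ?_⟩
    rw [preimage_inter, inter_inter_distrib_left]
    exact hinter _ hx _ hy
  · rintro ⟨-, h⟩
    rw [preimage_empty, inter_empty] at h
    exact hempty h

theorem mk_Iio_inter_preimage_le {θ : Cardinal.{0}} (hainj : AlmostInj lam θ g)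
    {x : Set Ordinal.{0}} (hx : x ⊆ Iio lam.ord) :
    #↥(Iio lam.ord ∩ g ⁻¹' x) ≤ #x * Cardinal.lift.{1} θ := by
  have hcover : Iio lam.ord ∩ g ⁻¹' x ⊆ ⋃ γ ∈ x, {α | α < lam.ord ∧ g α = γ} :=
    fun α hα => mem_biUnion hα.2 ⟨hα.1, rfl⟩
  calc #↥(Iio lam.ord ∩ g ⁻¹' x)
      ≤ #x * ⨆ γ : x, #{α | α < lam.ord ∧ g α = γ} :=
        (mk_le_mk_of_subset hcover).trans (mk_biUnion_le _ _)
    _ ≤ #x * Cardinal.lift.{1} θ := by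
        gcongr
        exact ciSup_le' fun γ => (hainj γ (hx γ.2)).le

theorem IsUniform.projection {θ : Cardinal.{0}} (hF : IsUniform lam F) (hlam : ℵ₀ ≤ lam)
    (hθlam : θ < lam) (hainj : AlmostInj lam θ g) : IsUniform lam (projection lam g F) := by
  rintro x ⟨hxlam, hx⟩
  have hle : #x ≤ Cardinal.lift.{1} lam := by
    simpa [Cardinal.mk_Iio_ordinal] using mk_le_mk_of_subset hxlam
  refine hle.eq_of_not_lt fun hlt => (hF _ hx).not_lt ?_
  calc #↥(Iio lam.ord ∩ g ⁻¹' x)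
      ≤ #x * Cardinal.lift.{1} θ := mk_Iio_inter_preimage_le hainj hxlam
    _ < Cardinal.lift.{1} lam :=
        mul_lt_of_lt (by simpa using hlam) hlt (Cardinal.lift_lt.2 hθlam)

theorem endSegment_mem_projection (hF : IsFilterOn lam F)
    (hend : ∀ α < lam.ord, {β | α ≤ β ∧ β < lam.ord} ∈ F)
    (hmaps : ∀ α < lam.ord, g α < lam.ord) (hmono : MonoIncOn lam g) (hunb : UnbddIn lam g)
    {a : Ordinal.{0}} (ha : a < lam.ord) :
    {β | a ≤ β ∧ β < lam.ord} ∈ projection lam g F := by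
  obtain ⟨-, -, hsup, -⟩ := hF
  obtain ⟨α₀, hα₀, hgα₀⟩ := hunb a ha
  refine ⟨fun β hβ => hβ.2, hsup _ (hend α₀ hα₀) _ ?_ inter_subset_left⟩
  exact fun β hβ => ⟨hβ.2, hgα₀.trans (hmono α₀ β hβ.1 hβ.2), hmaps β hβ.2⟩

theorem BddCtbl.image (hmaps : ∀ α < lam.ord, g α < lam.ord) (hmono : MonoIncOn lam g)
    {u : Set Ordinal.{0}} (hu : BddCtbl lam u) (hinf : (g '' u).Infinite) :
    BddCtbl lam (g '' u) := by
  obtain ⟨hulam, hctbl, -, hsup⟩ := hu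
  refine ⟨?_, hctbl.image g, hinf, ?_⟩
  · rintro _ ⟨α, hα, rfl⟩
    exact hmaps α (hulam hα)
  · refine (csSup_le' ?_).trans_lt (hmaps _ hsup)
    rintro _ ⟨α, hα, rfl⟩
    exact hmono α _ (le_csSup (bddAbove_Iio.mono hulam) hα) hsup

theorem BddCtbl.of_image (hlam : ℵ₀ ≤ lam) (hmono : MonoIncOn lam g) (hunb : UnbddIn lam g)
    {v : Set Ordinal.{0}} (hvlam : v ⊆ Iio lam.ord) (hinj : InjOn g v)
    (hu : BddCtbl lam (g '' v)) : BddCtbl lam v := by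
  obtain ⟨hulam, hctbl, hinf, hsup⟩ := hu
  obtain ⟨α₀, hα₀, hgα₀⟩ := hunb _ ((isSuccLimit_ord hlam).succ_lt hsup)
  have hlt : ∀ α ∈ v, α < α₀ := fun α hα => lt_of_not_ge fun hle =>
    (Order.succ_le_iff.1 hgα₀).not_ge <|
      (hmono _ _ hle (hvlam hα)).trans
        (le_csSup (bddAbove_Iio.mono hulam) (mem_image_of_mem g hα))
  exact ⟨hvlam, countable_of_injective_of_countable_image hinj hctbl, hinf.of_image g,
    (csSup_le' fun α hα => (hlt α hα).le).trans_lt hα₀⟩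

theorem OmitsColors.projection (hcolor : OmitsColors lam F) (hF : IsFilterOn lam F)
    (hlam : ℵ₀ ≤ lam) (hmaps : ∀ α < lam.ord, g α < lam.ord) (hmono : MonoIncOn lam g)
    (hunb : UnbddIn lam g) : OmitsColors lam (projection lam g F) := by
  classical
  obtain ⟨-, hsub, hsup, -⟩ := hF
  intro c hc
  -- `g '' v` may be finite, where `c` is unconstrained
  let d : Set Ordinal.{0} → Ordinal.{0} := fun v => if (g '' v).Infinite then c (g '' v) else 0
  have hd : ∀ v, BddCtbl lam v → d v < lam.ord := by
    intro v hv
    by_cases hinf : (g '' v).Infinite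
    · simpa only [d, if_pos hinf] using hc _ (hv.image hmaps hmono hinf)
    · simpa only [d, if_neg hinf] using (isSuccLimit_ord hlam).pos
  obtain ⟨x, hxF, γ, hγ, homit⟩ := hcolor d hd
  have hxlam := hsub x hxF
  refine ⟨g '' x, ⟨?_, ?_⟩, γ, hγ, ?_⟩
  · rintro _ ⟨α, hα, rfl⟩
    exact hmaps α (hxlam hα)
  · exact hsup x hxF _ (fun α hα => ⟨hxlam hα, mem_image_of_mem g hα⟩) inter_subset_left
  · intro u hux hu
    obtain ⟨v, hvx, hinj, rfl⟩ := SurjOn.exists_subset_injOn_image_eq hux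
    have hdv : d v = c (g '' v) := if_pos hu.2.2.1
    exact hdv ▸ homit v hvx (hu.of_image hlam hmono hunb (hvx.trans hxlam) hinj)

end

/-- if `F` is a Magidor filter over `λ`, `θ < λ` is infinite, and
`g : λ → λ` is monotonically increasing, unbounded and almost one-to-one w.r.t. `θ`,
then the projection `G = {x ⊆ λ : g⁻¹[x] ∈ F}` is a Magidor filter over `λ`. -/
theorem projection_is_magidor_filter (lam θ : Cardinal.{0})
    (hθ : Cardinal.aleph0 ≤ θ) (hθlam : θ < lam)
    (F : Set (Set Ordinal.{0})) (hF : IsMagidorFilter lam F)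
    (g : Ordinal.{0} → Ordinal.{0})
    (hmaps : ∀ α < lam.ord, g α < lam.ord)
    (hmono : MonoIncOn lam g) (hunb : UnbddIn lam g) (hainj : AlmostInj lam θ g) :
    IsMagidorFilter lam
      {x : Set Ordinal.{0} | x ⊆ Set.Iio lam.ord ∧
        {α | α < lam.ord ∧ g α ∈ x} ∈ F} := by
  obtain ⟨hfilter, hunif, hend, hcolor⟩ := hF
  have hlam : ℵ₀ ≤ lam := hθ.trans hθlam.le
  show IsMagidorFilter lam (projection lam g F)
  exact ⟨hfilter.projection hmaps, IsUniform.projection hunif hlam hθlam hainj,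
    fun _ ha => endSegment_mem_projection hfilter hend hmaps hmono hunb ha,
    OmitsColors.projection hcolor hfilter hlam hmaps hmono hunb⟩
end

section
/- Let λ be a cardinal, let θ < λ be a regular infinite cardinal, let F be a uniform ultrafilter over λ, and let g : λ → λ be monotonically increasing, unbounded in λ, almost one-to-one with respect to θ, and <_F-minimal among such functions (there is no monotonically increasing, unbounded, almost one-to-one h : λ → λ with h <_F g). Let G := {x ⊆ λ : g⁻¹[x] ∈ F}. Then for every function h : λ → λ which is monotonically increasing and regressive on some set x ∈ G (i.e., h(β) < β for every β ∈ x), there exists γ < λ with |h⁻¹({γ})| ≥ θ. -/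
open Cardinal Set

/-
If `h` had all fibers of size `< θ`, then `h ∘ g` would again be monotone, unbounded and
almost one-to-one: a fiber of `h ∘ g` is a union of `< θ` fibers of `g`, each of size `< θ`,
hence small by regularity of `θ`, and a function on `λ` with small fibers cannot be bounded
since `λ` is not the union of `|β| < λ` sets of size `< θ < λ`. As `h` is regressive on `x`
and `g⁻¹[x] ∈ F`, we get `h ∘ g <_F g`, contradicting the minimality of `g`.
-/

section Fibers

variable {lam θ : Cardinal.{0}} {f g h : Ordinal.{0} → Ordinal.{0}}

def fiberBelow (lam : Cardinal.{0}) (f : Ordinal.{0} → Ordinal.{0}) (γ : Ordinal.{0}) :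
    Set Ordinal.{0} :=
  {α | α < lam.ord ∧ f α = γ}

theorem AlmostInj.comp (hθ : θ.IsRegular) (hgmaps : ∀ α < lam.ord, g α < lam.ord)
    (hh : AlmostInj lam θ h) (hg : AlmostInj lam θ g) : AlmostInj lam θ (h ∘ g) := by
  intro γ hγ
  have hcover : fiberBelow lam (h ∘ g) γ ⊆ ⋃ δ ∈ fiberBelow lam h γ, fiberBelow lam g δ :=
    fun α ⟨hα, hαγ⟩ => mem_biUnion (x := g α) ⟨hgmaps α hα, hαγ⟩ ⟨hα, rfl⟩
  refine (mk_le_mk_of_subset hcover).trans_lt ?_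
  rw [card_biUnion_lt_iff_forall_of_isRegular (s := fiberBelow lam h γ) hθ.lift (hh γ hγ)]
  exact fun δ hδ => hg δ hδ.1

theorem AlmostInj.unbddIn (hlam : ℵ₀ ≤ lam) (hθlam : θ < lam) (hf : AlmostInj lam θ f) :
    UnbddIn lam f := by
  by_contra hbdd
  simp only [UnbddIn, not_forall, not_exists, not_and, not_le] at hbdd
  obtain ⟨β, hβ, hfβ⟩ := hbdd
  have hcover : Iio lam.ord ⊆ ⋃ δ ∈ Iio β, fiberBelow lam f δ :=
    fun α hα => mem_biUnion (x := f α) (hfβ α hα) ⟨hα, rfl⟩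
  have hsmall : #(⋃ δ ∈ Iio β, fiberBelow lam f δ) < lift.{1} lam :=
    calc #(⋃ δ ∈ Iio β, fiberBelow lam f δ)
        ≤ #(Iio β) * ⨆ δ : Iio β, #(fiberBelow lam f δ) := mk_biUnion_le _ _
      _ ≤ lift.{1} β.card * lift.{1} θ := by
          rw [mk_Iio_ordinal]
          gcongr
          exact ciSup_le' fun δ => (hf δ (δ.2.trans hβ)).le
      _ < lift.{1} lam := by
          rw [← lift_mul, lift_lt]
          exact mul_lt_of_lt hlam (lt_ord.mp hβ) hθlam
  have hfull : #(Iio lam.ord) = lift.{1} lam := by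
    rw [mk_Iio_ordinal, card_ord]
  exact (hfull ▸ mk_le_mk_of_subset hcover).not_gt hsmall

theorem MonoIncOn.comp (hgmaps : ∀ α < lam.ord, g α < lam.ord) (hh : MonoIncOn lam h)
    (hg : MonoIncOn lam g) : MonoIncOn lam (h ∘ g) :=
  fun α β hαβ hβ => hh _ _ (hg α β hαβ hβ) (hgmaps β hβ)

theorem GoodFn.comp (hθ : θ.IsRegular) (hθlam : θ < lam) (hmaps : ∀ α < lam.ord, h α < lam.ord)
    (hmono : MonoIncOn lam h) (hinj : AlmostInj lam θ h) (hg : GoodFn lam θ g) :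
    GoodFn lam θ (h ∘ g) := by
  obtain ⟨hgmaps, hgmono, -, hginj⟩ := hg
  have hinj' := hinj.comp hθ hgmaps hginj
  exact ⟨fun α hα => hmaps _ (hgmaps α hα), hmono.comp hgmaps hgmono,
    hinj'.unbddIn (hθ.aleph0_le.trans hθlam.le) hθlam, hinj'⟩

end Fibers

theorem projection_weak_normality_general (lam θ : Cardinal.{0})
    (hθreg : θ.IsRegular) (hθlam : θ < lam)
    (F : Set (Set Ordinal.{0})) (hF : IsFilterOn lam F)
    (g : Ordinal.{0} → Ordinal.{0}) (hg : GoodFn lam θ g)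
    (hgmin : ∀ h : Ordinal.{0} → Ordinal.{0}, GoodFn lam θ h → ¬ ltF lam F h g)
    (h : Ordinal.{0} → Ordinal.{0})
    (hmaps : ∀ α < lam.ord, h α < lam.ord) (hmono : MonoIncOn lam h)
    (x : Set Ordinal.{0})
    (hxG : {α | α < lam.ord ∧ g α ∈ x} ∈ F)
    (hregr : ∀ β ∈ x, h β < β) :
    ∃ γ < lam.ord,
      Cardinal.lift.{1} θ ≤ #{α : Ordinal.{0} // α < lam.ord ∧ h α = γ} := by
  by_contra! hsmall
  have hgood : GoodFn lam θ (h ∘ g) := hg.comp hθreg hθlam hmaps hmono hsmall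
  obtain ⟨-, -, hFsup, -, -⟩ := hF
  have hlt : ltF lam F (h ∘ g) g :=
    hFsup _ hxG _ (fun α hα => ⟨hα.1, hregr _ hα.2⟩) fun _ hα => hα.1
  exact hgmin _ hgood hlt

/-- let `θ < λ` be regular, `F` a uniform ultrafilter over `λ`, and
`g : λ → λ` monotonically increasing, unbounded, almost one-to-one w.r.t. `θ` and
`<_F`-minimal among such functions; let `G` be the projection of `F` along `g`. Then
every monotonically increasing `h : λ → λ` which is regressive on some member of `G`
has a fiber `h⁻¹({γ})` (for some `γ < λ`) of cardinality at least `θ`. -/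
theorem projection_weak_normality (lam θ : Cardinal.{0})
    (hθreg : θ.IsRegular) (hθlam : θ < lam)
    (F : Set (Set Ordinal.{0})) (hF : IsFilterOn lam F)
    (hunif : ∀ x ∈ F, #x = Cardinal.lift.{1} lam)
    (hultra : ∀ x ⊆ Set.Iio lam.ord, x ∈ F ∨ Set.Iio lam.ord \ x ∈ F)
    (g : Ordinal.{0} → Ordinal.{0}) (hg : GoodFn lam θ g)
    (hgmin : ∀ h : Ordinal.{0} → Ordinal.{0}, GoodFn lam θ h → ¬ ltF lam F h g)
    (h : Ordinal.{0} → Ordinal.{0})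
    (hmaps : ∀ α < lam.ord, h α < lam.ord) (hmono : MonoIncOn lam h)
    (x : Set Ordinal.{0}) (hxsub : x ⊆ Set.Iio lam.ord)
    (hxG : {α | α < lam.ord ∧ g α ∈ x} ∈ F)
    (hregr : ∀ β ∈ x, h β < β) :
    ∃ γ < lam.ord,
      Cardinal.lift.{1} θ ≤ #{α : Ordinal.{0} // α < lam.ord ∧ h α = γ} :=
  projection_weak_normality_general lam θ hθreg hθlam F hF g hg hgmin h hmaps hmono x hxG hregr
end
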